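/- arXiv:1806.06139 — 2 statements merged into one kernel-verified Lean document; each statement's English description precedes it below -/
import Mathlib

section
/- Let (E,w) be a row-finite weighted graph with at least one vertex whose weighted part is weakly well-behaved. Let o = x₁…x_m be a nod-path whose first letter is e_i for some weighted edge e∈E¹_w and some 2≤i≤w(e). Then o = p₁q₁*…p_nq_n* or o = p₁q₁*…p_{n−1}q_{n−1}*p_n, where n≥1, p₁,…,p_n are super-special paths in Ê and q₁,…,q_n are unweighted paths in Ê. -/
/-!
Definitions for weighted graphs and weighted Leavitt path algebras,
following Hazrat–Preusser.  All weighted graphs are assumed row-finite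
with at least one vertex (this is built into the structure).
-/

/-- A (row-finite, nonempty) weighted graph `(E,w)`. -/
structure WeightedGraph : Type 1 where
  V : Type
  E : Type
  s : E → V
  r : E → V
  w : E → ℕ
  w_pos : ∀ e, 1 ≤ w e
  rowFinite : ∀ v : V, {e : E | s e = v}.Finite
  vNonempty : Nonempty V

namespace WeightedGraph

section GraphDefs

variable (G : WeightedGraph)

/-- `(E,w)` is a finite weighted graph. -/
def IsFinite : Prop := Finite G.V ∧ Finite G.E

/-- `(E,w)` is unweighted iff all edges have weight 1. -/
def IsUnweighted : Prop := ∀ e : G.E, G.w e = 1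

/-- a sink is a vertex emitting no edges. -/
def IsSink (v : G.V) : Prop := ∀ e : G.E, G.s e ≠ v

/-- `w(v) = max { w(e) ∣ e ∈ s⁻¹(v) }` (with `max ∅ = 0`). -/
noncomputable def vw (v : G.V) : ℕ := sSup (G.w '' {e : G.E | G.s e = v})

/-- Edges of the associated directed graph `Ê`: pairs `(e,i)` with `1 ≤ i ≤ w(e)`,
representing the edge `e_i`. -/
abbrev HatE : Type := {p : G.E × ℕ // 1 ≤ p.2 ∧ p.2 ≤ G.w p.1}

def hatS (x : G.HatE) : G.V := G.s x.1.1

def hatR (x : G.HatE) : G.V := G.r x.1.1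

/-- Letters of the double graph `Ê_d`: `Sum.inl` is a real edge `e_i`,
`Sum.inr` is a ghost edge `e_i^*`. -/
abbrev DL : Type := G.HatE ⊕ G.HatE

/-- source of a letter of `Ê_d`. -/
def dS : G.DL → G.V
  | Sum.inl x => G.hatS x
  | Sum.inr x => G.hatR x

/-- range of a letter of `Ê_d`. -/
def dR : G.DL → G.V
  | Sum.inl x => G.hatR x
  | Sum.inr x => G.hatS x

def dFlip : G.DL → G.DL
  | Sum.inl x => Sum.inr x
  | Sum.inr x => Sum.inl x

/-- the star `p ↦ p^*` of a d-word. -/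
def dStar (l : List G.DL) : List G.DL := (l.map G.dFlip).reverse

/-- standard degree of a letter: `deg e_i = ε_i`, `deg e_i^* = -ε_i`
(as finitely supported functions `ℕ →₀ ℤ`). -/
noncomputable def dDeg : G.DL → (ℕ →₀ ℤ)
  | Sum.inl x => Finsupp.single x.1.2 1
  | Sum.inr x => -(Finsupp.single x.1.2 1)

/-- homogeneous degree of a d-word. -/
noncomputable def dWordDeg (l : List G.DL) : ℕ →₀ ℤ := (l.map G.dDeg).sum

/-- `u ≥ v`: there is a path in `E` from `u` to `v`. -/
def Reaches : G.V → G.V → Prop :=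
  Relation.ReflTransGen (fun u v => ∃ e : G.E, G.s e = u ∧ G.r e = v)

/-- a nontrivial path in `E`, given by its (nonempty) list of edges. -/
def IsPath (l : List G.E) : Prop :=
  l ≠ [] ∧ l.Chain' (fun a b => G.r a = G.s b)

/-- source of a nontrivial path. -/
def pSrc? (l : List G.E) : Option G.V := l.head?.map G.s

/-- range of a nontrivial path. -/
def pRng? (l : List G.E) : Option G.V := l.getLast?.map G.r

/-- a cycle in `E`: a closed nontrivial path with pairwise distinct sources. -/
def IsCycle (l : List G.E) : Prop :=
  G.IsPath l ∧ G.pRng? l = G.pSrc? l ∧ (l.map G.s).Nodup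

def Acyclic : Prop := ∀ l : List G.E, ¬ G.IsCycle l

/-- the cycle `l` has an exit. -/
def CycleHasExit (l : List G.E) : Prop :=
  ∃ x ∈ l, ∃ e : G.E, G.s e = G.s x ∧ e ≠ x

def NoCycleHasExit : Prop := ∀ l : List G.E, G.IsCycle l → ¬ G.CycleHasExit l

/-- `v ∈ T(r(E¹_w))`: some weighted edge's range reaches `v`. -/
def InTRw (v : G.V) : Prop := ∃ g : G.E, 1 < G.w g ∧ G.Reaches (G.r g) v

/-- two edges are in line. -/
def InLine (e f : G.E) : Prop :=
  e = f ∨ G.Reaches (G.r e) (G.s f) ∨ G.Reaches (G.r f) (G.s e)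

/-- Condition (i): no vertex emits two distinct weighted edges. -/
def Cond1 : Prop := ∀ e f : G.E, 1 < G.w e → 1 < G.w f → G.s e = G.s f → e = f

/-- Condition (ii): no vertex of `T(r(E¹_w))` emits two distinct edges. -/
def Cond2 : Prop :=
  ∀ v : G.V, G.InTRw v → ∀ e f : G.E, G.s e = v → G.s f = v → e = f

/-- Condition (iii): weighted edges not in line have disjoint trees of their ranges. -/
def Cond3 : Prop :=
  ∀ e f : G.E, 1 < G.w e → 1 < G.w f → ¬ G.InLine e f →
    ∀ v : G.V, G.Reaches (G.r e) v → ¬ G.Reaches (G.r f) v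

/-- Condition (iv): no cycle is based at a vertex of `T(r(E¹_w))`. -/
def Cond4 : Prop :=
  ∀ l : List G.E, G.IsCycle l → ∀ v : G.V, G.pSrc? l = some v → ¬ G.InTRw v

/-- Condition (v): there is no "weighted/unweighted zig-zag cycle" of paths
`p₁,…,p_n,q₁,…,q_n` (indices cyclic, 0-based). -/
def Cond5 : Prop :=
  ¬ ∃ (n : ℕ) (hn : 0 < n) (p q : Fin n → List G.E),
      (∀ i, G.IsPath (p i)) ∧ (∀ i, G.IsPath (q i)) ∧
      (∀ i, G.pRng? (p i) = G.pRng? (q i)) ∧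
      (∀ i : Fin n, G.pSrc? (p ⟨(i.1 + 1) % n, Nat.mod_lt _ hn⟩) = G.pSrc? (q i)) ∧
      (∀ i, ∃ a, (p i).head? = some a ∧ 1 < G.w a) ∧
      (∀ i, ∃ a, (q i).head? = some a ∧ G.w a = 1) ∧
      (∀ i, ∃ a b, (p i).getLast? = some a ∧ (q i).getLast? = some b ∧ a ≠ b)

/-- the weighted part of `(E,w)` is weakly well-behaved. -/
def WeaklyWellBehaved : Prop := G.Cond1 ∧ G.Cond2 ∧ G.Cond3 ∧ G.Cond4

/-- the weighted part of `(E,w)` is well-behaved. -/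
def WellBehaved : Prop := G.WeaklyWellBehaved ∧ G.Cond5

/-- a weighted edge is of type A if it is the only edge emitted by its source. -/
def TypeA (e : G.E) : Prop := ∀ f : G.E, G.s f = G.s e → f = e

/-- `sp` is a choice of special edges: for every non-sink `v`, `sp v ∈ s⁻¹(v)`
and `w (sp v) = w(v)`. -/
def HasSpecial (sp : G.V → G.E) : Prop :=
  ∀ v : G.V, (∃ e : G.E, G.s e = v) → G.s (sp v) = v ∧ G.w (sp v) = G.vw v

/-- forbidden two-letter words, relative to a choice `sp` of special edges:
`e^v_i (e^v_j)^*` and `e_1^* f_1` (for `e,f` with the same source). -/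
def Forbidden (sp : G.V → G.E) : G.DL → G.DL → Prop
  | Sum.inl a, Sum.inr b => a.1.1 = b.1.1 ∧ a.1.1 = sp (G.s a.1.1)
  | Sum.inr a, Sum.inl b => a.1.2 = 1 ∧ b.1.2 = 1 ∧ G.s a.1.1 = G.s b.1.1
  | _, _ => False

/-- a d-word is a path in the double graph `Ê_d`. -/
def IsDWord (l : List G.DL) : Prop := l.Chain' (fun x y => G.dR x = G.dS y)

/-- source of a nontrivial d-path. -/
def dSrc? (l : List G.DL) : Option G.V := l.head?.map G.dS

/-- range of a nontrivial d-path. -/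
def dRng? (l : List G.DL) : Option G.V := l.getLast?.map G.dR

/-- a nod-path: a d-path none of whose subwords is forbidden. -/
def IsNod (sp : G.V → G.E) (l : List G.DL) : Prop :=
  G.IsDWord l ∧ l.Chain' (fun x y => ¬ G.Forbidden sp x y)

/-- a (nontrivial) nod²-path: a nod-path `p` such that `p²` is a nod-path. -/
def IsNod2 (sp : G.V → G.E) (l : List G.DL) : Prop :=
  l ≠ [] ∧ G.IsNod sp (l ++ l)

/-- a quasicycle: a nod²-path `p` such that no subword of `p²` of length `< |p|`
is a nod²-path. -/
def IsQuasicycle (sp : G.V → G.E) (l : List G.DL) : Prop :=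
  G.IsNod2 sp l ∧
    ∀ m : List G.DL, m <:+: (l ++ l) → m.length < l.length → ¬ G.IsNod2 sp m

/-- a lenod-path: a nod-path `p` such that `o ++ p` is a nod-path for every
nontrivial nod-path `o` with `r(o) = s(p)`. -/
def IsLenod (sp : G.V → G.E) (l : List G.DL) : Prop :=
  G.IsNod sp l ∧ ∀ o : List G.DL, o ≠ [] → G.IsNod sp o →
    G.dRng? o = G.dSrc? l → G.IsNod sp (o ++ l)

/-- a nontrivial path in `Ê`, as a nonempty list of edges of `Ê`. -/
def IsHatPath (l : List G.HatE) : Prop :=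
  l ≠ [] ∧ l.Chain' (fun a b => G.hatR a = G.hatS b)

/-- `max { w(f) ∣ f ∈ s⁻¹(s(e)), f ≠ e }` (with `max ∅ = 0`). -/
noncomputable def maxOther (e : G.E) : ℕ :=
  sSup (G.w '' {f : G.E | G.s f = G.s e ∧ f ≠ e})

/-- a super-special path in `Ê`. -/
def IsSuperSpecial (l : List G.HatE) : Prop :=
  G.IsHatPath l ∧ ∀ x ∈ l, G.maxOther x.1.1 < x.1.2

/-- an unweighted path in `Ê`. -/
def IsUnweightedPath (l : List G.HatE) : Prop :=
  G.IsHatPath l ∧ ∀ x ∈ l, G.w x.1.1 = 1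

def hatSrc? (l : List G.HatE) : Option G.V := l.head?.map G.hatS

def hatRng? (l : List G.HatE) : Option G.V := l.getLast?.map G.hatR

/-- a closed nontrivial path in `Ê`. -/
def IsHatClosed (l : List G.HatE) : Prop :=
  G.IsHatPath l ∧ G.hatRng? l = G.hatSrc? l

/-- a cycle in `Ê`. -/
def IsHatCycle (l : List G.HatE) : Prop :=
  G.IsHatPath l ∧ G.hatRng? l = G.hatSrc? l ∧ (l.map G.hatS).Nodup

/-- embedding of paths of `Ê` as d-words consisting of real edges. -/
def embR (l : List G.HatE) : List G.DL := l.map Sum.inl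

end GraphDefs

section AlgebraDefs

variable (G : WeightedGraph) (K : Type) [Field K]

/-- generator of the free algebra corresponding to a vertex. -/
noncomputable def gV (v : G.V) : FreeAlgebra K (G.V ⊕ G.DL) :=
  FreeAlgebra.ι K (Sum.inl v)

/-- generator of the free algebra corresponding to a (real or ghost) edge of `Ê_d`. -/
noncomputable def gD (x : G.DL) : FreeAlgebra K (G.V ⊕ G.DL) :=
  FreeAlgebra.ι K (Sum.inr x)

/-- `e_i`, interpreted as `0` if `i > w(e)` or `i = 0`. -/
noncomputable def gReal (e : G.E) (i : ℕ) : FreeAlgebra K (G.V ⊕ G.DL) :=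
  if h : 1 ≤ i ∧ i ≤ G.w e then G.gD K (Sum.inl ⟨(e, i), h⟩) else 0

/-- `e_i^*`, interpreted as `0` if `i > w(e)` or `i = 0`. -/
noncomputable def gGhost (e : G.E) (i : ℕ) : FreeAlgebra K (G.V ⊕ G.DL) :=
  if h : 1 ≤ i ∧ i ≤ G.w e then G.gD K (Sum.inr ⟨(e, i), h⟩) else 0

end AlgebraDefs

/-- The defining relations of the weighted Leavitt path algebra `L_K(E,w)`:
the path algebra relations, the two families of Leavitt relations, and
(for a graph with finitely many vertices) `∑ v = 1`. -/
inductive LRel (G : WeightedGraph) (K : Type) [Field K] :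
    FreeAlgebra K (G.V ⊕ G.DL) → FreeAlgebra K (G.V ⊕ G.DL) → Prop
  | vertex_eq (v : G.V) : LRel G K (G.gV K v * G.gV K v) (G.gV K v)
  | vertex_ne (v v' : G.V) (h : v ≠ v') : LRel G K (G.gV K v * G.gV K v') 0
  | src (x : G.DL) : LRel G K (G.gV K (G.dS x) * G.gD K x) (G.gD K x)
  | rng (x : G.DL) : LRel G K (G.gD K x * G.gV K (G.dR x)) (G.gD K x)
  | inner_eq (v : G.V) (i : ℕ) (h1 : 1 ≤ i) (h2 : i ≤ G.vw v) :
      LRel G K (∑ᶠ e ∈ {e : G.E | G.s e = v}, G.gReal K e i * G.gGhost K e i)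
        (G.gV K v)
  | inner_ne (v : G.V) (i j : ℕ) (h1 : 1 ≤ i) (h2 : i ≤ G.vw v)
      (h3 : 1 ≤ j) (h4 : j ≤ G.vw v) (hij : i ≠ j) :
      LRel G K (∑ᶠ e ∈ {e : G.E | G.s e = v}, G.gReal K e i * G.gGhost K e j) 0
  | outer_eq (e : G.E) :
      LRel G K (∑ i ∈ Finset.Icc 1 (G.vw (G.s e)), G.gGhost K e i * G.gReal K e i)
        (G.gV K (G.r e))
  | outer_ne (e f : G.E) (h : G.s e = G.s f) (hef : e ≠ f) :
      LRel G K (∑ i ∈ Finset.Icc 1 (G.vw (G.s e)), G.gGhost K e i * G.gReal K f i) 0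
  | unit (h : Finite G.V) : LRel G K (∑ᶠ v : G.V, G.gV K v) 1

/-- The weighted Leavitt path algebra `L_K(E,w)`. -/
abbrev LWPA (G : WeightedGraph) (K : Type) [Field K] : Type :=
  RingQuot (LRel G K)

/-- image of a vertex in `L_K(E,w)`. -/
noncomputable def vx (G : WeightedGraph) (K : Type) [Field K] (v : G.V) : LWPA G K :=
  RingQuot.mkAlgHom K (LRel G K) (G.gV K v)

/-- image of a letter of `Ê_d` in `L_K(E,w)`. -/
noncomputable def dlx (G : WeightedGraph) (K : Type) [Field K] (x : G.DL) : LWPA G K :=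
  RingQuot.mkAlgHom K (LRel G K) (G.gD K x)

/-- image of a d-word in `L_K(E,w)` (product of its letters). -/
noncomputable def wordProd (G : WeightedGraph) (K : Type) [Field K]
    (l : List G.DL) : LWPA G K :=
  (l.map (G.dlx K)).prod

/-- image in `L_K(E,w)` of an arbitrary word in vertices and edges of `Ê_d`. -/
noncomputable def genProd (G : WeightedGraph) (K : Type) [Field K]
    (l : List (G.V ⊕ G.DL)) : LWPA G K :=
  (l.map (fun t => RingQuot.mkAlgHom K (LRel G K) (FreeAlgebra.ι K t))).prod

/-- degree of a generator (vertices have degree `0`). -/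
noncomputable def genDeg (G : WeightedGraph) : G.V ⊕ G.DL → (ℕ →₀ ℤ)
  | Sum.inl _ => 0
  | Sum.inr x => G.dDeg x

/-- degree of a word in the generators. -/
noncomputable def genWordDeg (G : WeightedGraph) (l : List (G.V ⊕ G.DL)) : ℕ →₀ ℤ :=
  (l.map G.genDeg).sum

/-- the homogeneous component of degree `g` of `L_K(E,w)` with respect to the
standard grading: the span of the images of all words of degree `g`. -/
noncomputable def component (G : WeightedGraph) (K : Type) [Field K] (g : ℕ →₀ ℤ) :
    Submodule K (LWPA G K) :=
  Submodule.span K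
    {a : LWPA G K | ∃ l : List (G.V ⊕ G.DL), G.genWordDeg l = g ∧ a = G.genProd K l}

/-- `L_K(E,w)` is locally finite with respect to its standard grading. -/
def LocallyFinite (G : WeightedGraph) (K : Type) [Field K] : Prop :=
  ∀ g : ℕ →₀ ℤ, FiniteDimensional K ↥(G.component K g)

end WeightedGraph

/-- The Gelfand–Kirillov dimension of a `K`-algebra `A`: the supremum over all
finite-dimensional subspaces `W ≤ A` of
`limsup_n log(dim_K (K + W + W² + ⋯ + Wⁿ)) / log n`. -/
noncomputable def gkDim (K : Type) [Field K] (A : Type) [Ring A] [Algebra K A] : EReal :=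
  ⨆ (W : Submodule K A) (_ : FiniteDimensional K ↥W),
    Filter.limsup
      (fun n : ℕ =>
        ((Real.log (Module.finrank K ↥(∑ i ∈ Finset.range (n + 1), W ^ i) : ℝ) /
            Real.log (n : ℝ) : ℝ) : EReal))
      Filter.atTop

/-!
Cut `o` into maximal blocks of real and ghost letters. A real block `p` starting with `e_i`,
`e` weighted and `i ≥ 2`, is super-special and consists of special edges: `e` is the only
weighted edge at its source by (i), and every later edge of `p` lies in `T(r(E¹_w))`, where each
vertex emits a single edge by (ii). So the ghost block `q^*` that follows starts with the ghost of
an edge other than the last edge of `p`, with the same range. If `q` contained a weighted edge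
`g`, then `T(r(e))` and `T(r(g))` would meet, so `e` and `g` are in line by (iii); as walks
inside `T(r(E¹_w))` are unique by (ii) and (iv), `p` and `q` would end with the same edge.
Hence `q` is unweighted, its first edge has index `1`, and since `e_1^* f_1` is forbidden, the
next real block again starts with `f_j`, `j ≥ 2`, `f` weighted.
-/

namespace List

theorem isChain_and {α : Type*} {R S : α → α → Prop} :
    ∀ {l : List α}, l.IsChain (fun a b => R a b ∧ S a b) ↔ l.IsChain R ∧ l.IsChain S
  | [] => by simp
  | [_] => by simp
  | a :: b :: l => by
    simp only [isChain_cons_cons, isChain_and (l := b :: l)]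
    tauto

theorem exists_eq_map_inl_append {α β : Type*} :
    ∀ l : List (α ⊕ β), ∃ (P : List α) (rest : List (α ⊕ β)),
      l = P.map Sum.inl ++ rest ∧ ∀ z ∈ rest.head?, z.isRight
  | [] => ⟨[], [], rfl, by simp⟩
  | Sum.inr b :: l => ⟨[], Sum.inr b :: l, rfl, by simp⟩
  | Sum.inl a :: l => by
    obtain ⟨P, rest, rfl, h⟩ := exists_eq_map_inl_append l
    exact ⟨a :: P, rest, rfl, h⟩

theorem exists_eq_map_inr_append {α β : Type*} (l : List (α ⊕ β)) :
    ∃ (Q : List β) (rest : List (α ⊕ β)),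
      l = Q.map Sum.inr ++ rest ∧ ∀ z ∈ rest.head?, z.isLeft := by
  obtain ⟨Q, rest, h, hrest⟩ := exists_eq_map_inl_append (l.map Sum.swap)
  refine ⟨Q, rest.map Sum.swap, ?_, ?_⟩
  · simpa [map_map, Function.comp_def] using congrArg (map Sum.swap) h
  · cases rest <;> simp_all

end List

namespace WeightedGraph

variable {G : WeightedGraph}

def IsWalk (G : WeightedGraph) : G.V → G.V → List G.E → Prop
  | a, v, [] => a = v
  | a, v, e :: l => G.s e = a ∧ G.IsWalk (G.r e) v l

theorem isWalk_append {a v : G.V} {l₁ l₂ : List G.E} :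
    G.IsWalk a v (l₁ ++ l₂) ↔ ∃ m, G.IsWalk a m l₁ ∧ G.IsWalk m v l₂ := by
  induction l₁ generalizing a with
  | nil => simp [IsWalk]
  | cons e t ih => simp [IsWalk, ih, and_assoc]

theorem isWalk_cons_iff {a v : G.V} {e : G.E} {l : List G.E} :
    G.IsWalk a v (e :: l) ↔
      G.s e = a ∧ (e :: l).IsChain (fun x y => G.r x = G.s y) ∧
        (e :: l).getLast?.map G.r = some v := by
  induction l generalizing a e with
  | nil => simp [IsWalk]
  | cons f l ih =>
    rw [IsWalk, ih, List.isChain_cons_cons, List.getLast?_cons_cons, @eq_comm _ (G.s f)]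
    tauto

theorem reaches_s_r (e : G.E) : G.Reaches (G.s e) (G.r e) :=
  .single ⟨e, rfl, rfl⟩

theorem IsWalk.reaches {a v : G.V} {l : List G.E} (h : G.IsWalk a v l) : G.Reaches a v := by
  induction l generalizing a with
  | nil => exact h ▸ .refl
  | cons e t ih => exact h.1 ▸ (reaches_s_r e).trans (ih h.2)

theorem Reaches.exists_isWalk {a v : G.V} (h : G.Reaches a v) : ∃ l, G.IsWalk a v l := by
  induction h using Relation.ReflTransGen.head_induction_on with
  | refl => exact ⟨[], rfl⟩
  | head hab _ ih =>
    obtain ⟨e, rfl, rfl⟩ := hab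
    obtain ⟨l, hl⟩ := ih
    exact ⟨e :: l, rfl, hl⟩

theorem IsWalk.reaches_s_of_mem {a v : G.V} {l : List G.E} (h : G.IsWalk a v l) {e : G.E}
    (he : e ∈ l) : G.Reaches a (G.s e) := by
  obtain ⟨l₁, l₂, rfl⟩ := List.append_of_mem he
  obtain ⟨m, h₁, rfl, -⟩ := isWalk_append.1 h
  exact h₁.reaches

theorem InTRw.of_reaches {a v : G.V} (ha : G.InTRw a) (h : G.Reaches a v) : G.InTRw v :=
  let ⟨g, hg, hga⟩ := ha
  ⟨g, hg, hga.trans h⟩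

theorem inTRw_r {e : G.E} (he : 1 < G.w e) : G.InTRw (G.r e) :=
  ⟨e, he, .refl⟩

section Conditions

theorem nodup_map_s (h2 : G.Cond2) {l : List G.E} (hl : l.Nodup)
    (hT : ∀ e ∈ l, G.InTRw (G.s e)) : (l.map G.s).Nodup :=
  hl.map_on fun e he f _ hef => h2 _ (hT e he) e f rfl hef.symm

theorem eq_nil_of_isWalk_self (h2 : G.Cond2) (h4 : G.Cond4) {a : G.V} {l : List G.E}
    (ha : G.InTRw a) (hl : G.IsWalk a a l) : l = [] := by
  induction hn : l.length using Nat.strong_induction_on generalizing a l with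
  | _ n ih =>
  subst hn
  by_contra hne
  by_cases hnd : l.Nodup
  · have hT (e) (he : e ∈ l) : G.InTRw (G.s e) := ha.of_reaches (hl.reaches_s_of_mem he)
    obtain ⟨e, t, rfl⟩ := List.exists_cons_of_ne_nil hne
    obtain ⟨rfl, hchain, hlast⟩ := isWalk_cons_iff.1 hl
    exact h4 (e :: t) ⟨⟨hne, hchain⟩, by simpa [pRng?, pSrc?] using hlast, nodup_map_s h2 hnd hT⟩
      _ rfl ha
  · -- a repeated edge `e` cuts out a shorter closed walk `e :: (B ++ C)`
    obtain ⟨e, he⟩ := not_forall_not.1 (List.nodup_iff_sublist.not.1 hnd)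
    obtain ⟨r₁, r₂, rfl, he₁, he₂⟩ := List.cons_sublist_iff.1 he
    obtain ⟨A, B, rfl⟩ := List.append_of_mem he₁
    obtain ⟨C, D, rfl⟩ := List.append_of_mem (List.singleton_sublist.1 he₂)
    obtain ⟨m₁, hAB, hCD⟩ := isWalk_append.1 hl
    obtain ⟨m₂, hA, rfl, hB⟩ := isWalk_append.1 hAB
    obtain ⟨m₃, hC, rfl, -⟩ := isWalk_append.1 hCD
    have hcut : G.IsWalk (G.s e) (G.s e) (e :: (B ++ C)) := ⟨rfl, isWalk_append.2 ⟨m₁, hB, hC⟩⟩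
    have hlen : (e :: (B ++ C)).length < (A ++ e :: B ++ (C ++ e :: D)).length := by
      simp only [List.length_append, List.length_cons]
      omega
    exact List.cons_ne_nil _ _ (ih _ hlen (ha.of_reaches hA.reaches) hcut rfl)

theorem eq_of_isWalk (h2 : G.Cond2) (h4 : G.Cond4) :
    ∀ {a v : G.V} {l₁ l₂ : List G.E}, G.InTRw a → G.IsWalk a v l₁ → G.IsWalk a v l₂ → l₁ = l₂
  | _, _, [], _, ha, rfl, h => (eq_nil_of_isWalk_self h2 h4 ha h).symm
  | _, _, _ :: _, [], ha, h, rfl => eq_nil_of_isWalk_self h2 h4 ha h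
  | _, _, e :: _, f :: _, ha, ⟨he, h₁⟩, ⟨hf, h₂⟩ => by
    obtain rfl := h2 _ ha e f he hf
    rw [eq_of_isWalk h2 h4 (ha.of_reaches (he ▸ reaches_s_r e)) h₁ h₂]

theorem getLast?_cons_eq_of_reaches (h2 : G.Cond2) (h4 : G.Cond4) {e f : G.E} (he : 1 < G.w e)
    {v : G.V} {p q : List G.E} (hp : G.IsWalk (G.r e) v p) (hq : G.IsWalk (G.r f) v q)
    (hef : G.Reaches (G.r e) (G.s f)) : (e :: p).getLast? = (f :: q).getLast? := by
  obtain ⟨l, hl⟩ := hef.exists_isWalk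
  obtain rfl : p = l ++ f :: q :=
    eq_of_isWalk h2 h4 (inTRw_r he) hp (isWalk_append.2 ⟨_, hl, rfl, hq⟩)
  exact List.getLast?_append_cons (e :: l) f q

theorem getLast?_cons_eq_of_weighted (h2 : G.Cond2) (h3 : G.Cond3) (h4 : G.Cond4) {e f : G.E}
    (he : 1 < G.w e) (hf : 1 < G.w f) {v : G.V} {p q : List G.E} (hp : G.IsWalk (G.r e) v p)
    (hq : G.IsWalk (G.r f) v q) : (e :: p).getLast? = (f :: q).getLast? := by
  have hline : G.InLine e f := by
    by_contra hline
    exact h3 e f he hf hline v hp.reaches hq.reaches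
  rcases hline with rfl | hef | hfe
  · rw [eq_of_isWalk h2 h4 (inTRw_r he) hp hq]
  · exact getLast?_cons_eq_of_reaches h2 h4 he hp hq hef
  · exact (getLast?_cons_eq_of_reaches h2 h4 hf hq hp hfe).symm

theorem w_eq_one_of_getLast?_ne (h2 : G.Cond2) (h3 : G.Cond3) (h4 : G.Cond4) {e : G.E}
    (he : 1 < G.w e) {u v : G.V} {p l : List G.E} (hp : G.IsWalk (G.r e) v p)
    (hl : G.IsWalk u v l) (hlast : (e :: p).getLast? ≠ l.getLast?) {f : G.E} (hf : f ∈ l) :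
    G.w f = 1 := by
  by_contra hf1
  obtain ⟨l₁, l₂, rfl⟩ := List.append_of_mem hf
  obtain ⟨_, -, -, hl₂⟩ := isWalk_append.1 hl
  refine hlast ?_
  rw [List.getLast?_append_cons,
    getLast?_cons_eq_of_weighted h2 h3 h4 he (lt_of_le_of_ne (G.w_pos f) (Ne.symm hf1)) hp hl₂]

theorem le_vw (e : G.E) : G.w e ≤ G.vw (G.s e) :=
  le_csSup ((G.rowFinite (G.s e)).image G.w).bddAbove ⟨e, rfl, rfl⟩

variable {sp : G.V → G.E}

theorem eq_sp_of_weighted (h1 : G.Cond1) (hsp : G.HasSpecial sp) {e : G.E} (he : 1 < G.w e) :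
    e = sp (G.s e) := by
  obtain ⟨hs, hw⟩ := hsp (G.s e) ⟨e, rfl⟩
  exact h1 e _ he (hw ▸ he.trans_le (le_vw e)) hs.symm

theorem eq_sp_of_inTRw (h2 : G.Cond2) (hsp : G.HasSpecial sp) {e : G.E}
    (he : G.InTRw (G.s e)) : e = sp (G.s e) :=
  h2 _ he e _ rfl (hsp (G.s e) ⟨e, rfl⟩).1

theorem maxOther_le_one (h1 : G.Cond1) {e : G.E} (he : 1 < G.w e) : G.maxOther e ≤ 1 :=
  csSup_le' <| by
    rintro _ ⟨f, ⟨hf, hfe⟩, rfl⟩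
    by_contra hf1
    exact hfe (h1 f e (by omega) he hf)

theorem maxOther_eq_zero (h2 : G.Cond2) {e : G.E} (he : G.InTRw (G.s e)) : G.maxOther e = 0 :=
  Nat.le_zero.1 <| csSup_le' <| by
    rintro _ ⟨f, ⟨hf, hfe⟩, rfl⟩
    exact (hfe (h2 _ he f e hf rfl)).elim

end Conditions

section HatPaths

variable {sp : G.V → G.E}

theorem isWalk_map_of_isChain {x : G.HatE} {l : List G.HatE} {v : G.V}
    (hl : (x :: l).IsChain (fun a b => G.hatR a = G.hatS b))
    (hv : (x :: l).getLast?.map G.hatR = some v) :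
    G.IsWalk (G.hatS x) v ((x :: l).map (·.1.1)) := by
  have hc : ((x :: l).map (·.1.1)).IsChain (fun a b => G.r a = G.s b) := (List.isChain_map _).2 hl
  have hr : ((x :: l).map (·.1.1)).getLast?.map G.r = some v := by
    rwa [List.getLast?_map, Option.map_map]
  rw [List.map_cons] at hc hr ⊢
  exact isWalk_cons_iff.2 ⟨rfl, hc, hr⟩

theorem inTRw_hatS_of_mem_tail {x : G.HatE} {l : List G.HatE} (hx : G.InTRw (G.hatR x))
    (hl : (x :: l).IsChain (fun a b => G.hatR a = G.hatS b)) {z : G.HatE} (hz : z ∈ l) :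
    G.InTRw (G.hatS z) :=
  have hw := isWalk_map_of_isChain hl
    (by rw [List.getLast?_eq_some_getLast (List.cons_ne_nil x l)]; rfl)
  hx.of_reaches (hw.2.reaches_s_of_mem (List.mem_map_of_mem hz))

theorem isSuperSpecial_cons (h1 : G.Cond1) (h2 : G.Cond2) {x : G.HatE} {l : List G.HatE}
    (hx : 1 < G.w x.1.1) (hi : 2 ≤ x.1.2)
    (hl : (x :: l).IsChain (fun a b => G.hatR a = G.hatS b)) : G.IsSuperSpecial (x :: l) := by
  refine ⟨⟨List.cons_ne_nil _ _, hl⟩, ?_⟩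
  rintro z (_ | ⟨_, hz⟩)
  · exact (maxOther_le_one h1 hx).trans_lt hi
  · rw [maxOther_eq_zero h2 (inTRw_hatS_of_mem_tail (inTRw_r hx) hl hz)]
    exact z.2.1

theorem eq_sp_of_mem_cons (h1 : G.Cond1) (h2 : G.Cond2) (hsp : G.HasSpecial sp)
    {x : G.HatE} {l : List G.HatE} (hx : 1 < G.w x.1.1)
    (hl : (x :: l).IsChain (fun a b => G.hatR a = G.hatS b)) {z : G.HatE} (hz : z ∈ x :: l) :
    z.1.1 = sp (G.s z.1.1) := by
  rcases hz with _ | ⟨_, hz⟩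
  · exact eq_sp_of_weighted h1 hsp hx
  · exact eq_sp_of_inTRw h2 hsp (inTRw_hatS_of_mem_tail (inTRw_r hx) hl hz)

theorem isUnweightedPath_of_getLast?_ne (h2 : G.Cond2) (h3 : G.Cond3) (h4 : G.Cond4)
    {x : G.HatE} {l q : List G.HatE} (hx : 1 < G.w x.1.1)
    (hl : (x :: l).IsChain (fun a b => G.hatR a = G.hatS b)) (hq : G.IsHatPath q) {v : G.V}
    (hv : (x :: l).getLast?.map G.hatR = some v) (hqv : q.getLast?.map G.hatR = some v)
    (hne : (x :: l).getLast?.map (·.1.1) ≠ q.getLast?.map (·.1.1)) : G.IsUnweightedPath q := by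
  obtain ⟨y, t, rfl⟩ := List.exists_cons_of_ne_nil hq.1
  refine ⟨hq, fun z hz => w_eq_one_of_getLast?_ne h2 h3 h4 hx (isWalk_map_of_isChain hl hv).2
    (isWalk_map_of_isChain hq.2 hqv) ?_ (List.mem_map_of_mem hz)⟩
  show ((x :: l).map (·.1.1)).getLast? ≠ ((y :: t).map (·.1.1)).getLast?
  rwa [List.getLast?_map, List.getLast?_map]

end HatPaths

section Nod

variable {sp : G.V → G.E}

def NodStep (G : WeightedGraph) (sp : G.V → G.E) (a b : G.DL) : Prop :=
  G.dR a = G.dS b ∧ ¬ G.Forbidden sp a b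

theorem isNod_iff_isChain {l : List G.DL} : G.IsNod sp l ↔ l.IsChain (G.NodStep sp) :=
  List.isChain_and.symm

theorem isChain_of_isChain_map_inl {P : List G.HatE}
    (h : (P.map Sum.inl).IsChain (G.NodStep sp)) : P.IsChain (fun a b => G.hatR a = G.hatS b) :=
  ((List.isChain_map _).1 h).imp fun _ _ h => h.1

theorem isChain_reverse_of_isChain_map_inr {Q : List G.HatE}
    (h : (Q.map Sum.inr).IsChain (G.NodStep sp)) :
    Q.reverse.IsChain (fun a b => G.hatR a = G.hatS b) :=
  List.isChain_reverse.2 <| ((List.isChain_map _).1 h).imp fun _ _ h => h.1.symm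

theorem ne_and_hatR_eq_of_nodStep {c Y : G.HatE} (h : G.NodStep sp (.inl c) (.inr Y))
    (hc : c.1.1 = sp (G.s c.1.1)) : c.1.1 ≠ Y.1.1 ∧ G.hatR c = G.hatR Y :=
  ⟨fun hcY => h.2 ⟨hcY, hc⟩, h.1⟩

theorem two_le_of_nodStep {y z : G.HatE} (h : G.NodStep sp (.inr y) (.inl z))
    (hy : G.w y.1.1 = 1) : 2 ≤ z.1.2 := by
  by_contra hz
  have hy' := y.2
  have hz' := z.2.1
  exact h.2 ⟨by omega, by omega, h.1⟩

theorem isUnweightedPath_reverse_of_isChain (h1 : G.Cond1) (h2 : G.Cond2) (h3 : G.Cond3)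
    (h4 : G.Cond4) (hsp : G.HasSpecial sp) {x : G.HatE} {l Q : List G.HatE}
    (hx : 1 < G.w x.1.1) (hQ : Q ≠ [])
    (h : ((x :: l).map Sum.inl ++ Q.map Sum.inr).IsChain (G.NodStep sp)) :
    G.IsUnweightedPath Q.reverse := by
  obtain ⟨hP, hQc, hj⟩ := List.isChain_append.1 h
  have hl := isChain_of_isChain_map_inl hP
  obtain ⟨c, hc⟩ : ∃ c, (x :: l).getLast? = some c :=
    ⟨_, List.getLast?_eq_some_getLast (List.cons_ne_nil x l)⟩
  obtain ⟨Y, Q', rfl⟩ := List.exists_cons_of_ne_nil hQ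
  obtain ⟨hne, hr⟩ := ne_and_hatR_eq_of_nodStep
    (hj (.inl c) (by rw [List.getLast?_map, hc]; rfl) (.inr Y) rfl)
    (eq_sp_of_mem_cons h1 h2 hsp hx hl (List.mem_of_getLast? hc))
  exact isUnweightedPath_of_getLast?_ne h2 h3 h4 hx hl
    ⟨by simp, isChain_reverse_of_isChain_map_inr hQc⟩ (v := G.hatR c) (by simp [hc])
    (by simp [hr]) (by simpa [hc] using hne)

end Nod

def HasPQDecomposition (G : WeightedGraph) (o : List G.DL) : Prop :=
  (∃ (n : ℕ), 0 < n ∧ ∃ ps qs : Fin n → List G.HatE,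
      (∀ k, G.IsSuperSpecial (ps k)) ∧ (∀ k, G.IsUnweightedPath (qs k)) ∧
      o = (List.ofFn (fun k : Fin n =>
            G.embR (ps k) ++ G.dStar (G.embR (qs k)))).flatten) ∨
  (∃ (m : ℕ) (ps : Fin (m + 1) → List G.HatE) (qs : Fin m → List G.HatE),
      (∀ k, G.IsSuperSpecial (ps k)) ∧ (∀ k, G.IsUnweightedPath (qs k)) ∧
      o = (List.ofFn (fun k : Fin m =>
            G.embR (ps k.castSucc) ++ G.dStar (G.embR (qs k)))).flatten
          ++ G.embR (ps (Fin.last m)))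

theorem hasPQDecomposition_embR {P : List G.HatE} (hP : G.IsSuperSpecial P) :
    G.HasPQDecomposition (G.embR P) :=
  .inr ⟨0, fun _ => P, Fin.elim0, fun _ => hP, fun k => k.elim0, by simp⟩

theorem hasPQDecomposition_embR_append_dStar {P q : List G.HatE} (hP : G.IsSuperSpecial P)
    (hq : G.IsUnweightedPath q) : G.HasPQDecomposition (G.embR P ++ G.dStar (G.embR q)) :=
  .inl ⟨1, one_pos, fun _ => P, fun _ => q, fun _ => hP, fun _ => hq, by simp⟩

theorem HasPQDecomposition.embR_append_dStar_append {P q : List G.HatE} {o : List G.DL}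
    (h : G.HasPQDecomposition o) (hP : G.IsSuperSpecial P) (hq : G.IsUnweightedPath q) :
    G.HasPQDecomposition (G.embR P ++ (G.dStar (G.embR q) ++ o)) := by
  rcases h with ⟨n, hn, ps, qs, hps, hqs, rfl⟩ | ⟨m, ps, qs, hps, hqs, rfl⟩
  · refine .inl ⟨n + 1, n.succ_pos, Fin.cons P ps, Fin.cons q qs, Fin.cases hP hps,
      Fin.cases hq hqs, ?_⟩
    simp [List.ofFn_succ]
  · refine .inr ⟨m + 1, Fin.cons P ps, Fin.cons q qs, Fin.cases hP hps, Fin.cases hq hqs, ?_⟩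
    simp [List.ofFn_succ, ← Fin.succ_last]

theorem dStar_embR_reverse (Q : List G.HatE) : G.dStar (G.embR Q.reverse) = Q.map Sum.inr := by
  simp [dStar, embR, List.map_reverse, Function.comp_def, dFlip]

theorem hasPQDecomposition_of_isChain (h1 : G.Cond1) (h2 : G.Cond2) (h3 : G.Cond3)
    (h4 : G.Cond4) {sp : G.V → G.E} (hsp : G.HasSpecial sp) {x : G.HatE}
    (hx : 1 < G.w x.1.1) (hi : 2 ≤ x.1.2) (o : List G.DL)
    (ho : (Sum.inl x :: o).IsChain (G.NodStep sp)) :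
    G.HasPQDecomposition (Sum.inl x :: o) := by
  obtain ⟨l, rest, rfl, hrest⟩ := List.exists_eq_map_inl_append o
  rw [← List.cons_append, ← List.map_cons] at ho ⊢
  have hP := isSuperSpecial_cons h1 h2 hx hi
    (isChain_of_isChain_map_inl (List.isChain_append.1 ho).1)
  obtain ⟨Q, rest', rfl, hrest'⟩ := List.exists_eq_map_inr_append rest
  rcases eq_or_ne Q [] with rfl | hQ
  · obtain rfl : rest' = [] := by
      rcases rest' with _ | ⟨_ | _, _⟩ <;> simp_all
    simp only [List.map_nil, List.append_nil]
    exact hasPQDecomposition_embR hP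
  rw [← List.append_assoc] at ho
  have hq :=
    isUnweightedPath_reverse_of_isChain h1 h2 h3 h4 hsp hx hQ (List.isChain_append.1 ho).1
  rw [← dStar_embR_reverse]
  cases rest' with
  | nil =>
    rw [List.append_nil]
    exact hasPQDecomposition_embR_append_dStar hP hq
  | cons a o' =>
    obtain ⟨z, rfl⟩ : ∃ z, a = Sum.inl z := by cases a <;> simp_all
    obtain ⟨-, hz, hj⟩ := List.isChain_append.1 ho
    have hlast : (Q.map Sum.inr).getLast? = some (Sum.inr (Q.getLast hQ) : G.DL) := by
      rw [List.getLast?_map, List.getLast?_eq_some_getLast hQ]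
      rfl
    have hzi : 2 ≤ z.1.2 := two_le_of_nodStep
      (hj _ (by rwa [List.getLast?_append_of_ne_nil _ (by simpa using hQ)]) _ rfl)
      (hq.2 _ (List.mem_reverse.2 (List.getLast_mem hQ)))
    exact (hasPQDecomposition_of_isChain h1 h2 h3 h4 hsp (by have := z.2.2; omega) hzi o' hz
      ).embR_append_dStar_append hP hq
termination_by o.length

end WeightedGraph

/-- **Lemma (Statement 5).** Suppose the weighted part of `(E,w)` is weakly
well-behaved.  If `o` is a nod-path whose first letter is `e_i` with `e` a
weighted edge and `2 ≤ i ≤ w(e)`, then `o = p₁q₁^* ⋯ p_nq_n^*` or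
`o = p₁q₁^* ⋯ p_{n-1}q_{n-1}^* p_n`, where the `p_k` are super-special paths in
`Ê` and the `q_k` are unweighted paths in `Ê`. -/
theorem nod_decomposition (G : WeightedGraph) (hwb : G.WeaklyWellBehaved)
    (sp : G.V → G.E) (hsp : G.HasSpecial sp)
    (o : List G.DL) (hnod : G.IsNod sp o)
    (e : G.HatE) (h1 : o.head? = some (Sum.inl e))
    (hw : 1 < G.w e.1.1) (hi : 2 ≤ e.1.2) :
    (∃ (n : ℕ), 0 < n ∧ ∃ ps qs : Fin n → List G.HatE,
        (∀ k, G.IsSuperSpecial (ps k)) ∧ (∀ k, G.IsUnweightedPath (qs k)) ∧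
        o = (List.ofFn (fun k : Fin n =>
              G.embR (ps k) ++ G.dStar (G.embR (qs k)))).flatten) ∨
    (∃ (m : ℕ) (ps : Fin (m + 1) → List G.HatE) (qs : Fin m → List G.HatE),
        (∀ k, G.IsSuperSpecial (ps k)) ∧ (∀ k, G.IsUnweightedPath (qs k)) ∧
        o = (List.ofFn (fun k : Fin m =>
              G.embR (ps k.castSucc) ++ G.dStar (G.embR (qs k)))).flatten
            ++ G.embR (ps (Fin.last m))) := by
  obtain ⟨hc1, hc2, hc3, hc4⟩ := hwb
  obtain ⟨o, rfl⟩ : ∃ o', o = Sum.inl e :: o' := by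
    cases o with
    | nil => simp at h1
    | cons a o' => exact ⟨o', by simpa using h1⟩
  exact WeightedGraph.hasPQDecomposition_of_isChain hc1 hc2 hc3 hc4 hsp hw hi o
    (WeightedGraph.isNod_iff_isChain.1 hnod)
end

section
/- Let (E,w) be a row-finite weighted graph with at least one vertex and let q = x₁…x_n be a quasicycle such that qq* is a nod-path and q* is a cyclic rotation of q (i.e. q* = x_{k+1}…x_n x₁…x_k for some 1≤k≤n). Then q = q*. -/
namespace WeightedGraph

variable {G : WeightedGraph} {sp : G.V → G.E}

theorem IsNod.infix {l m : List G.DL} (h : G.IsNod sp l) (hml : m <:+: l) : G.IsNod sp m :=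
  ⟨h.1.infix hml, h.2.infix hml⟩

theorem IsQuasicycle.not_isNod2_drop {q : List G.DL} (hq : G.IsQuasicycle sp q) {k : ℕ}
    (hk : 1 ≤ k) : ¬ G.IsNod2 sp (q.drop k) := by
  have hinfix : q.drop k <:+: q ++ q :=
    (List.drop_suffix k q).isInfix.trans (List.prefix_append q q).isInfix
  refine hq.2 _ hinfix ?_
  rw [List.length_drop]
  have := List.length_pos_iff.mpr hq.1.1
  omega

theorem isNod2_drop_of_dStar_eq {q : List G.DL} {k : ℕ} (hk : k < q.length)
    (hnod : G.IsNod sp (q ++ G.dStar q)) (hrot : G.dStar q = q.drop k ++ q.take k) :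
    G.IsNod2 sp (q.drop k) := by
  -- with `t = q.take k` and `p = q.drop k`, we have `q q^* = t p p t`
  have hsquare : q.drop k ++ q.drop k <:+: q ++ G.dStar q := by
    refine ⟨q.take k, q.take k, ?_⟩
    rw [hrot, List.append_assoc, List.append_assoc, ← List.append_assoc (q.take k),
      List.take_append_drop]
  exact ⟨by simpa using hk, hnod.infix hsquare⟩

end WeightedGraph

theorem quasicycle_star_rotation_general (G : WeightedGraph)
    (sp : G.V → G.E)
    (q : List G.DL) (hq : G.IsQuasicycle sp q)
    (hnod : G.IsNod sp (q ++ G.dStar q))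
    (hrot : ∃ k, 1 ≤ k ∧ k ≤ q.length ∧ G.dStar q = q.drop k ++ q.take k) :
    G.dStar q = q := by
  obtain ⟨k, hk, hkq, hrot⟩ := hrot
  rcases hkq.eq_or_lt with rfl | hkq
  · simpa using hrot
  · exact absurd (WeightedGraph.isNod2_drop_of_dStar_eq hkq hnod hrot) (hq.not_isNod2_drop hk)

/-- **Lemma (Statement 12).** Let `q` be a quasicycle such that `qq^*` is a
nod-path and `q^*` is a cyclic rotation of `q`.  Then `q = q^*`. -/
theorem quasicycle_star_rotation (G : WeightedGraph)
    (sp : G.V → G.E) (hsp : G.HasSpecial sp)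
    (q : List G.DL) (hq : G.IsQuasicycle sp q)
    (hnod : G.IsNod sp (q ++ G.dStar q))
    (hrot : ∃ k, 1 ≤ k ∧ k ≤ q.length ∧ G.dStar q = q.drop k ++ q.take k) :
    G.dStar q = q :=
  quasicycle_star_rotation_general G sp q hq hnod hrot
end
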